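/- Define the rescaled CR3BP Hamiltonian Ĥ_μ(q,p) = μ^{−2/3}·(H_μ(T(φ(q,p))) + (1−μ) + (1−μ)²/2), where T is translation by m_μ = (1−μ,0,0;0,1−μ,0) and φ(q,p) = (μ^{1/3}q, μ^{1/3}p). Then Ĥ_μ(q,p) = ½|p|² − 1/|q| + p₁q₂ − p₂q₁ − (1−μ)μ^{−2/3}·(1/√((μ^{1/3}q₁+1)² + μ^{2/3}(q₂²+q₃²)) + μ^{1/3}q₁ − 1), and the pointwise limit as μ → 0⁺ equals the Hill Hamiltonian Ĥ₀(q,p) = ½|p|² − 1/|q| + p₁q₂ − p₂q₁ + ½|q|² − (3/2)q₁², for every (q,p) with q ≠ 0. -/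

import Mathlib

open scoped BigOperators
open Filter

/-- Phase space `ℝ⁶` as pairs `(q, p)` with `q, p ∈ ℝ³`. -/
abbrev Phase3 := (Fin 3 → ℝ) × (Fin 3 → ℝ)

/-- Euclidean norm of a vector in `ℝ³`. -/
noncomputable def nrm3 (q : Fin 3 → ℝ) : ℝ := Real.sqrt (∑ i, q i ^ 2)

/-- The CR3BP Hamiltonian
`H_μ = ½|p|² + p₁q₂ − p₂q₁ − μ/|q−m| − (1−μ)/|q−e|`
with `m = (1−μ,0,0)`, `e = (−μ,0,0)`. -/
noncomputable def Hcr (μ : ℝ) (z : Phase3) : ℝ :=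
  (1 / 2) * ∑ i, z.2 i ^ 2 + z.2 0 * z.1 1 - z.2 1 * z.1 0
    - μ / nrm3 (z.1 - ![1 - μ, 0, 0]) - (1 - μ) / nrm3 (z.1 - ![-μ, 0, 0])

/-- Translation `T` by the moon's position-momentum vector `m_μ`. -/
def Tmap (μ : ℝ) (z : Phase3) : Phase3 :=
  (z.1 + ![1 - μ, 0, 0], z.2 + ![0, 1 - μ, 0])

/-- The symplectic scaling `φ(q,p) = (μ^{1/3} q, μ^{1/3} p)`. -/
noncomputable def scaling (μ : ℝ) (z : Phase3) : Phase3 :=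
  (fun i => μ ^ ((1 : ℝ) / 3) * z.1 i, fun i => μ ^ ((1 : ℝ) / 3) * z.2 i)

/-- The rescaled CR3BP Hamiltonian
`Ĥ_μ = μ^{−2/3}(H_μ ∘ T ∘ φ + (1−μ) + (1−μ)²/2)`. -/
noncomputable def Hhat (μ : ℝ) (z : Phase3) : ℝ :=
  μ ^ (-(2 : ℝ) / 3) *
    (Hcr μ (Tmap μ (scaling μ z)) + (1 - μ) + (1 - μ) ^ 2 / 2)

/-- The Hill's problem Hamiltonian. -/
noncomputable def Hhill (z : Phase3) : ℝ :=
  (1 / 2) * ∑ i, z.2 i ^ 2 - 1 / nrm3 z.1 + z.2 0 * z.1 1 - z.2 1 * z.1 0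
    + (1 / 2) * ∑ i, z.1 i ^ 2 - (3 / 2) * z.1 0 ^ 2

/-- Auxiliary rational expression appearing in the rescaled potential. -/
noncomputable def Frat (q0 Q s : ℝ) : ℝ :=
  (q0 * (2*q0 + s*Q) / (Real.sqrt (1 + 2*s*q0 + s^2*Q) + 1) + 2*q0^2 + s*q0*Q - Q)
    / (Real.sqrt (1 + 2*s*q0 + s^2*Q) + (1 + 2*s*q0 + s^2*Q))

lemma key_alg (q0 Q s : ℝ) (hs : s ≠ 0) (hD : 0 < 1 + 2*s*q0 + s^2*Q) :
    (s^2)⁻¹ * (1 / Real.sqrt (1 + 2*s*q0 + s^2*Q) + s*q0 - 1) = Frat q0 Q s := by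
  unfold Frat
  set y := Real.sqrt (1 + 2*s*q0 + s^2*Q) with hydef
  have hy : 0 < y := Real.sqrt_pos.mpr hD
  have hy2 : y^2 = 1 + 2*s*q0 + s^2*Q := Real.sq_sqrt hD.le
  have hQ : Q = (y^2 - 1 - 2*s*q0)/s^2 := by
    rw [eq_div_iff (by positivity)]; linear_combination -hy2
  rw [show (1 + 2*s*q0 + s^2*Q) = y^2 from hy2.symm, hQ]
  have h1y : (0:ℝ) < y + 1 := by linarith
  field_simp
  ring

lemma key_lim (q0 Q : ℝ) :
    Tendsto (fun s : ℝ => (1 - s^3) * Frat q0 Q s) (nhds 0) (nhds ((3*q0^2 - Q)/2)) := by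
  have hD : Continuous fun s : ℝ => 1 + 2*s*q0 + s^2*Q := by continuity
  have hsq : Continuous fun s : ℝ => Real.sqrt (1 + 2*s*q0 + s^2*Q) :=
    Real.continuous_sqrt.comp hD
  have hval : ∀ s : ℝ, s = 0 → Real.sqrt (1 + 2*s*q0 + s^2*Q) = 1 := by
    intro s hs; subst hs; norm_num
  have hc : ContinuousAt (fun s : ℝ => (1 - s^3) * Frat q0 Q s) 0 := by
    unfold Frat
    apply ContinuousAt.mul (by fun_prop)
    apply ContinuousAt.div
    · exact ContinuousAt.sub (ContinuousAt.add (ContinuousAt.add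
        (ContinuousAt.div (by fun_prop) (by fun_prop)
          (by simp [hval 0 rfl])) (by fun_prop)) (by fun_prop)) (by fun_prop)
    · exact ContinuousAt.add hsq.continuousAt hD.continuousAt
    · simp [hval 0 rfl]
  have := hc.tendsto
  simp only [Frat] at this ⊢
  convert this using 2
  norm_num [Real.sqrt_one]
  ring

/-- The rescaled CR3BP Hamiltonian expands as stated, and converges pointwise
to the Hill Hamiltonian as `μ → 0⁺`. -/
theorem rescaled_cr3bp_hill_limit (z : Phase3) (hq : z.1 ≠ 0) :
    (∀ μ : ℝ, 0 < μ →
      Hhat μ z =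
        (1 / 2) * ∑ i, z.2 i ^ 2 - 1 / nrm3 z.1 + z.2 0 * z.1 1 - z.2 1 * z.1 0
          - (1 - μ) * μ ^ (-(2 : ℝ) / 3) *
            (1 / Real.sqrt ((μ ^ ((1 : ℝ) / 3) * z.1 0 + 1) ^ 2
                + μ ^ ((2 : ℝ) / 3) * (z.1 1 ^ 2 + z.1 2 ^ 2))
              + μ ^ ((1 : ℝ) / 3) * z.1 0 - 1)) ∧
    Tendsto (fun μ => Hhat μ z) (nhdsWithin 0 (Set.Ioi 0)) (nhds (Hhill z)) := by
  have hpart1 : ∀ μ : ℝ, 0 < μ →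
      Hhat μ z =
        (1 / 2) * ∑ i, z.2 i ^ 2 - 1 / nrm3 z.1 + z.2 0 * z.1 1 - z.2 1 * z.1 0
          - (1 - μ) * μ ^ (-(2 : ℝ) / 3) *
            (1 / Real.sqrt ((μ ^ ((1 : ℝ) / 3) * z.1 0 + 1) ^ 2
                + μ ^ ((2 : ℝ) / 3) * (z.1 1 ^ 2 + z.1 2 ^ 2))
              + μ ^ ((1 : ℝ) / 3) * z.1 0 - 1) := by
    intro μ hμ
    have ht : 0 < μ ^ ((1:ℝ)/3) := Real.rpow_pos_of_pos hμ _
    set t := μ ^ ((1:ℝ)/3) with htdef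
    have ht3 : t^3 = μ := by
      rw [htdef, ← Real.rpow_natCast (μ ^ ((1:ℝ)/3)) 3, ← Real.rpow_mul hμ.le]; norm_num
    have ht2 : μ ^ ((2:ℝ)/3) = t^2 := by
      rw [htdef, ← Real.rpow_natCast (μ ^ ((1:ℝ)/3)) 2, ← Real.rpow_mul hμ.le]; norm_num
    have htn : μ ^ (-(2:ℝ)/3) = (t^2)⁻¹ := by
      rw [htdef, ← Real.rpow_natCast (μ ^ ((1:ℝ)/3)) 2, ← Real.rpow_mul hμ.le,
        ← Real.rpow_neg hμ.le]; norm_num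
    unfold Hhat Hcr Tmap scaling nrm3
    simp only [Fin.sum_univ_three, Pi.sub_apply, Pi.add_apply, Matrix.cons_val_zero,
      Matrix.cons_val_one, Matrix.head_cons, Matrix.cons_val_two, Matrix.tail_cons]
    rw [ht2, htn, ← htdef]
    have hNpos : 0 < Real.sqrt (z.1 0 ^ 2 + z.1 1 ^ 2 + z.1 2 ^ 2) := by
      have ⟨i, hi⟩ := Function.ne_iff.mp hq
      refine Real.sqrt_pos.mpr ?_
      have h0 : (0:ℝ) ≤ z.1 0 ^ 2 := sq_nonneg _
      have h1 : (0:ℝ) ≤ z.1 1 ^ 2 := sq_nonneg _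
      have h2 : (0:ℝ) ≤ z.1 2 ^ 2 := sq_nonneg _
      have : 0 < z.1 i ^ 2 := by
        exact pow_pos (abs_pos.mpr hi) 2 |>.trans_eq (by rw [sq_abs])
      fin_cases i <;> simp at this <;> nlinarith
    rw [show (t*z.1 0 + (1-μ) - (1-μ))^2 + (t*z.1 1 + 0 - 0)^2 + (t*z.1 2 + 0 - 0)^2
        = t^2*(z.1 0^2 + z.1 1^2 + z.1 2^2) from by ring]
    rw [show (t*z.1 0 + (1-μ) - -μ)^2 + (t*z.1 1+0-0)^2 + (t*z.1 2+0-0)^2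
        = (t*z.1 0 + 1)^2 + t^2*(z.1 1^2 + z.1 2^2) from by ring]
    rw [show (t:ℝ)^2 = t*t from sq t, Real.sqrt_mul (by positivity : (0:ℝ) ≤ t*t),
      Real.sqrt_mul_self ht.le]
    rw [← ht3]
    set N := Real.sqrt (z.1 0 ^ 2 + z.1 1 ^ 2 + z.1 2 ^ 2) with hNdef
    set S := Real.sqrt ((t * z.1 0 + 1) ^ 2 + t * t * (z.1 1 ^ 2 + z.1 2 ^ 2)) with hSdef
    rw [div_eq_mul_inv (t^3) (t*N), mul_inv, div_eq_mul_inv _ S, div_eq_mul_inv 1 S,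
      div_eq_mul_inv 1 N]
    field_simp [ht.ne', hNpos.ne']
    ring
  refine ⟨hpart1, ?_⟩
  -- the limit
  have hs0 : Tendsto (fun μ : ℝ => μ ^ ((1:ℝ)/3)) (nhdsWithin 0 (Set.Ioi 0)) (nhds 0) := by
    have hc : ContinuousAt (fun x : ℝ => x ^ ((1:ℝ)/3)) 0 :=
      Real.continuousAt_rpow_const 0 _ (Or.inr (by norm_num))
    have := hc.tendsto.mono_left (nhdsWithin_le_nhds (s := Set.Ioi (0:ℝ)))
    simpa [Real.zero_rpow (by norm_num : (1:ℝ)/3 ≠ 0)] using this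
  have hbig : Tendsto
      (fun μ : ℝ => (1 / 2) * ∑ i, z.2 i ^ 2 - 1 / nrm3 z.1 + z.2 0 * z.1 1 - z.2 1 * z.1 0
        - (1 - (μ ^ ((1:ℝ)/3))^3) *
            Frat (z.1 0) (z.1 0 ^ 2 + z.1 1 ^ 2 + z.1 2 ^ 2) (μ ^ ((1:ℝ)/3)))
      (nhdsWithin 0 (Set.Ioi 0))
      (nhds ((1 / 2) * ∑ i, z.2 i ^ 2 - 1 / nrm3 z.1 + z.2 0 * z.1 1 - z.2 1 * z.1 0
        - (3*(z.1 0)^2 - (z.1 0 ^ 2 + z.1 1 ^ 2 + z.1 2 ^ 2))/2)) :=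
    tendsto_const_nhds.sub ((key_lim _ _).comp hs0)
  have hDt : Tendsto (fun μ : ℝ => 1 + 2*(μ ^ ((1:ℝ)/3))*(z.1 0)
      + (μ ^ ((1:ℝ)/3))^2*(z.1 0 ^ 2 + z.1 1 ^ 2 + z.1 2 ^ 2))
      (nhdsWithin 0 (Set.Ioi 0)) (nhds 1) := by
    have hc : Continuous fun s : ℝ => 1 + 2*s*(z.1 0)
        + s^2*(z.1 0 ^ 2 + z.1 1 ^ 2 + z.1 2 ^ 2) := by continuity
    have := (hc.tendsto 0).comp hs0
    simpa [Function.comp_def] using this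
  have hev : (fun μ : ℝ => Hhat μ z) =ᶠ[nhdsWithin 0 (Set.Ioi 0)]
      (fun μ : ℝ => (1 / 2) * ∑ i, z.2 i ^ 2 - 1 / nrm3 z.1 + z.2 0 * z.1 1 - z.2 1 * z.1 0
        - (1 - (μ ^ ((1:ℝ)/3))^3) *
            Frat (z.1 0) (z.1 0 ^ 2 + z.1 1 ^ 2 + z.1 2 ^ 2) (μ ^ ((1:ℝ)/3))) := by
    filter_upwards [self_mem_nhdsWithin,
      hDt.eventually (eventually_gt_nhds (by norm_num : (0:ℝ) < 1))] with μ hμ hD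
    have hμ' : 0 < μ := hμ
    rw [hpart1 μ hμ']
    have ht : 0 < μ ^ ((1:ℝ)/3) := Real.rpow_pos_of_pos hμ' _
    set s := μ ^ ((1:ℝ)/3) with hsdef
    have ht3 : s^3 = μ := by
      rw [hsdef, ← Real.rpow_natCast (μ ^ ((1:ℝ)/3)) 3, ← Real.rpow_mul hμ'.le]; norm_num
    have ht2 : μ ^ ((2:ℝ)/3) = s^2 := by
      rw [hsdef, ← Real.rpow_natCast (μ ^ ((1:ℝ)/3)) 2, ← Real.rpow_mul hμ'.le]; norm_num
    have htn : μ ^ (-(2:ℝ)/3) = (s^2)⁻¹ := by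
      rw [hsdef, ← Real.rpow_natCast (μ ^ ((1:ℝ)/3)) 2, ← Real.rpow_mul hμ'.le,
        ← Real.rpow_neg hμ'.le]; norm_num
    rw [ht2, htn]
    rw [show (s*z.1 0 + 1)^2 + s^2*(z.1 1^2 + z.1 2^2)
        = 1 + 2*s*(z.1 0) + s^2*(z.1 0 ^ 2 + z.1 1 ^ 2 + z.1 2 ^ 2) from by ring]
    rw [← key_alg _ _ s ht.ne' hD, ← ht3]
    ring
  rw [show Hhill z = (1 / 2) * ∑ i, z.2 i ^ 2 - 1 / nrm3 z.1 + z.2 0 * z.1 1 - z.2 1 * z.1 0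
      - (3*(z.1 0)^2 - (z.1 0 ^ 2 + z.1 1 ^ 2 + z.1 2 ^ 2))/2 from by
    simp only [Hhill, Fin.sum_univ_three]; ring]
  exact hbig.congr' hev.symm
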